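/- Let f : [a,b] → ℝ be Hölder continuous of order r ∈ (0,1] with constant H, and u : [a,b] → ℝ of bounded variation. Then for all x ∈ [a,b], |∫ₐᵇ f du − [u(x) − u(a)]·f((a+x)/2) − [u(b) − u(x)]·f((x+b)/2)| ≤ (H/2^r) · ((b−a)/2 + |x − (a+b)/2|)^r · V(u;[a,b]). -/

import Mathlib

/-!
Split `[a, b]` at `x`. On `[a, x]` the Hölder condition keeps `f` within
`H / 2 ^ r * (x - a) ^ r` of its value at the midpoint `(a + x) / 2`, and likewise on `[x, b]`;
both lengths are at most `(b - a) / 2 + |x - (a + b) / 2| = max (x - a) (b - x)`.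
For a tagged partition of `[a, x]`, the Riemann–Stieltjes sum minus `f ((a + x) / 2) * (u x - u a)`
is `∑ (f (tag i) - f ((a + x) / 2)) * Δu_i`, which is bounded by that constant times the variation
of `u` on `[a, x]`. Concatenating fine partitions of `[a, x]` and `[x, b]` and using additivity
of the variation gives the estimate up to an arbitrary `ε`.
-/

/-- A tagged partition of the interval `[a, b]`. -/
structure TaggedPartition (a b : ℝ) where
  n : ℕ
  pts : ℕ → ℝ
  tag : ℕ → ℝ
  mono : ∀ i, pts i ≤ pts (i + 1)
  first : pts 0 = a
  last : pts n = b
  tag_mem : ∀ i, pts i ≤ tag i ∧ tag i ≤ pts (i + 1)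

/-- The Riemann–Stieltjes sum of `f` with respect to `u` over a tagged partition. -/
def RSsum (f u : ℝ → ℝ) {a b : ℝ} (P : TaggedPartition a b) : ℝ :=
  ∑ i ∈ Finset.range P.n, f (P.tag i) * (u (P.pts (i + 1)) - u (P.pts i))

/-- `IsRSIntegral f u a b I` means the Riemann–Stieltjes integral `∫ₐᵇ f du` exists
and equals `I`: Riemann–Stieltjes sums converge to `I` as the mesh tends to `0`. -/
def IsRSIntegral (f u : ℝ → ℝ) (a b I : ℝ) : Prop :=
  ∀ ε > 0, ∃ δ > 0, ∀ P : TaggedPartition a b,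
    (∀ i < P.n, P.pts (i + 1) - P.pts i < δ) → |RSsum f u P - I| < ε

/-- The total (Jordan) variation of `u` on `[a, b]`. -/
noncomputable def totalVar (u : ℝ → ℝ) (a b : ℝ) : ℝ :=
  (eVariationOn u (Set.Icc a b)).toReal

open Set Finset

namespace TaggedPartition

variable {a b c : ℝ}

def MeshLT (P : TaggedPartition a b) (δ : ℝ) : Prop :=
  ∀ i < P.n, P.pts (i + 1) - P.pts i < δ

theorem monotone_pts (P : TaggedPartition a b) : Monotone P.pts :=
  monotone_nat_of_le_succ P.mono

theorem pts_mem_Icc (P : TaggedPartition a b) {i : ℕ} (hi : i ≤ P.n) : P.pts i ∈ Icc a b :=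
  ⟨P.first.symm.le.trans (P.monotone_pts i.zero_le), (P.monotone_pts hi).trans P.last.le⟩

theorem left_le_right (P : TaggedPartition a b) : a ≤ b :=
  (P.pts_mem_Icc le_rfl).2.trans' (P.pts_mem_Icc le_rfl).1

theorem tag_mem_Icc (P : TaggedPartition a b) {i : ℕ} (hi : i < P.n) : P.tag i ∈ Icc a b :=
  ⟨(P.pts_mem_Icc hi.le).1.trans (P.tag_mem i).1, (P.tag_mem i).2.trans (P.pts_mem_Icc hi).2⟩

noncomputable def uniform (hab : a ≤ b) (n : ℕ) (hn : n ≠ 0) : TaggedPartition a b where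
  n := n
  pts i := a + i * ((b - a) / n)
  tag i := a + i * ((b - a) / n)
  mono i := by
    have : 0 ≤ (b - a) / n := div_nonneg (sub_nonneg.2 hab) n.cast_nonneg
    push_cast
    linarith
  first := by simp
  last := by field_simp; ring
  tag_mem i := by
    have : 0 ≤ (b - a) / n := div_nonneg (sub_nonneg.2 hab) n.cast_nonneg
    push_cast
    constructor <;> linarith

theorem exists_meshLT (hab : a ≤ b) {δ : ℝ} (hδ : 0 < δ) :
    ∃ P : TaggedPartition a b, P.MeshLT δ := by
  obtain ⟨n, hn⟩ := exists_nat_gt ((b - a) / δ)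
  have hn0 : (0 : ℝ) < n + 1 := by positivity
  refine ⟨uniform hab (n + 1) n.succ_ne_zero, fun i _ => ?_⟩
  simp only [uniform]
  push_cast
  rw [show a + (i + 1) * ((b - a) / (n + 1)) - (a + i * ((b - a) / (n + 1))) = (b - a) / (n + 1)
    by ring, div_lt_iff₀ hn0]
  rw [div_lt_iff₀ hδ] at hn
  nlinarith

def append (P : TaggedPartition a b) (Q : TaggedPartition b c) : TaggedPartition a c where
  n := P.n + Q.n
  pts i := if i < P.n then P.pts i else Q.pts (i - P.n)
  tag i := if i < P.n then P.tag i else Q.tag (i - P.n)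
  mono i := by
    split_ifs with h₁ h₂ h₂
    · exact P.mono i
    · rw [show i + 1 - P.n = 0 by omega, Q.first]
      exact (P.pts_mem_Icc h₁.le).2
    · omega
    · rw [show i + 1 - P.n = i - P.n + 1 by omega]
      exact Q.mono _
  first := by
    split_ifs with h
    · exact P.first
    · have h₀ := P.last
      rw [show P.n = 0 by omega, P.first] at h₀
      rw [Nat.zero_sub, Q.first, h₀]
  last := by simp [Q.last]
  tag_mem i := by
    split_ifs with h₁ h₂ h₂
    · exact P.tag_mem i
    · rw [show i + 1 - P.n = 0 by omega, Q.first]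
      exact ⟨(P.tag_mem i).1, (P.tag_mem_Icc h₁).2⟩
    · omega
    · rw [show i + 1 - P.n = i - P.n + 1 by omega]
      exact Q.tag_mem _

theorem append_pts_of_le (P : TaggedPartition a b) (Q : TaggedPartition b c) {i : ℕ}
    (hi : i ≤ P.n) : (P.append Q).pts i = P.pts i := by
  simp only [append]
  split_ifs with h
  · rfl
  · rw [show i - P.n = 0 by omega, Q.first, show i = P.n by omega, P.last]

theorem append_pts_add (P : TaggedPartition a b) (Q : TaggedPartition b c) (i : ℕ) :
    (P.append Q).pts (P.n + i) = Q.pts i := by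
  simp [append]

theorem append_tag_of_lt (P : TaggedPartition a b) (Q : TaggedPartition b c) {i : ℕ}
    (hi : i < P.n) : (P.append Q).tag i = P.tag i := by
  simp [append, hi]

theorem append_tag_add (P : TaggedPartition a b) (Q : TaggedPartition b c) (i : ℕ) :
    (P.append Q).tag (P.n + i) = Q.tag i := by
  simp [append]

theorem RSsum_append (f u : ℝ → ℝ) (P : TaggedPartition a b) (Q : TaggedPartition b c) :
    RSsum f u (P.append Q) = RSsum f u P + RSsum f u Q := by
  rw [RSsum, show (P.append Q).n = P.n + Q.n from rfl, sum_range_add]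
  congr 1
  · refine sum_congr rfl fun i hi => ?_
    have hi := mem_range.1 hi
    rw [append_tag_of_lt _ _ hi, append_pts_of_le _ _ hi.le, append_pts_of_le _ _ hi]
  · refine sum_congr rfl fun i _ => ?_
    rw [append_tag_add, append_pts_add, add_assoc, append_pts_add]

theorem MeshLT.append {P : TaggedPartition a b} {Q : TaggedPartition b c} {δ : ℝ}
    (hP : P.MeshLT δ) (hQ : Q.MeshLT δ) : (P.append Q).MeshLT δ := by
  intro i hi
  rcases lt_or_ge i P.n with h | h
  · rw [append_pts_of_le _ _ h, append_pts_of_le _ _ h.le]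
    exact hP i h
  · obtain ⟨j, rfl⟩ := Nat.exists_eq_add_of_le h
    rw [add_assoc, append_pts_add, append_pts_add]
    exact hQ j (Nat.lt_of_add_lt_add_left (hi : P.n + j < P.n + Q.n))

theorem sum_abs_sub_le_totalVar {u : ℝ → ℝ} (hu : BoundedVariationOn u (Icc a b))
    (P : TaggedPartition a b) :
    ∑ i ∈ range P.n, |u (P.pts (i + 1)) - u (P.pts i)| ≤ totalVar u a b := by
  have h := eVariationOn.sum_le_of_monotoneOn_Icc (f := u) (m := 0) (P.monotone_pts.monotoneOn _)
    fun i hi => P.pts_mem_Icc hi.2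
  rw [← range_eq_Ico] at h
  have h' := ENNReal.toReal_mono hu h
  simpa only [ENNReal.toReal_sum fun _ _ => edist_ne_top _ _, ← dist_edist, Real.dist_eq,
    totalVar] using h'

theorem abs_RSsum_sub_mul_le {f u : ℝ → ℝ} {c K : ℝ} (hu : BoundedVariationOn u (Icc a b))
    (hf : ∀ t ∈ Icc a b, |f t - c| ≤ K) (P : TaggedPartition a b) :
    |RSsum f u P - c * (u b - u a)| ≤ K * totalVar u a b := by
  have hK : 0 ≤ K := (abs_nonneg _).trans (hf a ⟨le_rfl, P.left_le_right⟩)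
  have htelescope : c * (u b - u a) = ∑ i ∈ range P.n, c * (u (P.pts (i + 1)) - u (P.pts i)) := by
    rw [← mul_sum, sum_range_sub (fun i => u (P.pts i)), P.first, P.last]
  calc |RSsum f u P - c * (u b - u a)|
      = |∑ i ∈ range P.n, (f (P.tag i) - c) * (u (P.pts (i + 1)) - u (P.pts i))| := by
        simp only [RSsum, htelescope, ← sum_sub_distrib, sub_mul]
    _ ≤ ∑ i ∈ range P.n, K * |u (P.pts (i + 1)) - u (P.pts i)| := by
        refine (abs_sum_le_sum_abs _ _).trans (sum_le_sum fun i hi => ?_)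
        rw [abs_mul]
        exact mul_le_mul_of_nonneg_right (hf _ (P.tag_mem_Icc (mem_range.1 hi))) (abs_nonneg _)
    _ ≤ K * totalVar u a b := by
        rw [← mul_sum]
        exact mul_le_mul_of_nonneg_left (sum_abs_sub_le_totalVar hu P) hK

end TaggedPartition

theorem totalVar_add {u : ℝ → ℝ} {a b c : ℝ} (hu : BoundedVariationOn u (Icc a c))
    (hab : a ≤ b) (hbc : b ≤ c) : totalVar u a b + totalVar u b c = totalVar u a c := by
  have h := eVariationOn.Icc_add_Icc u hab hbc (mem_univ b)
  simp only [univ_inter] at h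
  rw [totalVar, totalVar, totalVar, ← h, ENNReal.toReal_add]
  · exact ne_top_of_le_ne_top hu (eVariationOn.mono u (Icc_subset_Icc le_rfl hbc))
  · exact ne_top_of_le_ne_top hu (eVariationOn.mono u (Icc_subset_Icc hab le_rfl))

theorem abs_sub_midpoint_le_of_holder {f : ℝ → ℝ} {a b s t y H r : ℝ} (hH : 0 ≤ H) (hr : 0 ≤ r)
    (hf : ∀ p ∈ Icc a b, ∀ q ∈ Icc a b, |f p - f q| ≤ H * |p - q| ^ r)
    (hst : Icc s t ⊆ Icc a b) (hy : y ∈ Icc s t) :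
    |f y - f ((s + t) / 2)| ≤ H / 2 ^ r * (t - s) ^ r := by
  obtain ⟨hsy, hyt⟩ := hy
  have hdist : |y - (s + t) / 2| ≤ (t - s) / 2 := abs_le.2 ⟨by linarith, by linarith⟩
  calc |f y - f ((s + t) / 2)| ≤ H * |y - (s + t) / 2| ^ r :=
        hf y (hst ⟨hsy, hyt⟩) _ (hst ⟨by linarith, by linarith⟩)
    _ ≤ H * ((t - s) / 2) ^ r := by gcongr
    _ = H / 2 ^ r * (t - s) ^ r := by
        rw [Real.div_rpow (by linarith) zero_le_two]
        ring

theorem IsRSIntegral.abs_sub_le_of_approx {f u : ℝ → ℝ} {a b I S C : ℝ}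
    (hI : IsRSIntegral f u a b I)
    (h : ∀ δ > 0, ∃ P : TaggedPartition a b, P.MeshLT δ ∧ |RSsum f u P - S| ≤ C) :
    |I - S| ≤ C := by
  refine le_of_forall_pos_lt_add fun ε hε => ?_
  obtain ⟨δ, hδ, hconv⟩ := hI ε hε
  obtain ⟨P, hP, hPS⟩ := h δ hδ
  calc |I - S| ≤ |I - RSsum f u P| + |RSsum f u P - S| := abs_sub_le ..
    _ < C + ε := by linarith [abs_sub_comm I (RSsum f u P), hconv P hP]

theorem two_point_subinterval_midpoints_bounded_variation_general
    (a b H r x I : ℝ) (f u : ℝ → ℝ)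
    (hr : 0 < r) (hH : 0 ≤ H)
    (hf : ∀ s ∈ Set.Icc a b, ∀ t ∈ Set.Icc a b, |f s - f t| ≤ H * |s - t| ^ r)
    (hu : BoundedVariationOn u (Set.Icc a b))
    (hx : x ∈ Set.Icc a b)
    (hI : IsRSIntegral f u a b I) :
    |I - (u x - u a) * f ((a + x) / 2) - (u b - u x) * f ((x + b) / 2)| ≤
      (H / 2 ^ r) * ((b - a) / 2 + |x - (a + b) / 2|) ^ r * totalVar u a b := by
  obtain ⟨hax, hxb⟩ := hx
  set K := H / 2 ^ r * ((b - a) / 2 + |x - (a + b) / 2|) ^ r with hK_def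
  have hK : ∀ ℓ, 0 ≤ ℓ → ℓ ≤ (b - a) / 2 + |x - (a + b) / 2| → H / 2 ^ r * ℓ ^ r ≤ K :=
    fun ℓ hℓ₀ hℓ => by rw [hK_def]; gcongr
  have hleft : ∀ t ∈ Icc a x, |f t - f ((a + x) / 2)| ≤ K := fun t ht =>
    (abs_sub_midpoint_le_of_holder hH hr.le hf (Icc_subset_Icc le_rfl hxb) ht).trans <|
      hK _ (by linarith) (by linarith [le_abs_self (x - (a + b) / 2)])
  have hright : ∀ t ∈ Icc x b, |f t - f ((x + b) / 2)| ≤ K := fun t ht =>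
    (abs_sub_midpoint_le_of_holder hH hr.le hf (Icc_subset_Icc hax le_rfl) ht).trans <|
      hK _ (by linarith) (by linarith [neg_abs_le (x - (a + b) / 2)])
  rw [sub_sub]
  refine hI.abs_sub_le_of_approx fun δ hδ => ?_
  obtain ⟨P, hP⟩ := TaggedPartition.exists_meshLT hax hδ
  obtain ⟨Q, hQ⟩ := TaggedPartition.exists_meshLT hxb hδ
  refine ⟨P.append Q, hP.append hQ, ?_⟩
  calc |RSsum f u (P.append Q) - ((u x - u a) * f ((a + x) / 2) + (u b - u x) * f ((x + b) / 2))|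
      = |(RSsum f u P - f ((a + x) / 2) * (u x - u a)) +
          (RSsum f u Q - f ((x + b) / 2) * (u b - u x))| := by
        rw [TaggedPartition.RSsum_append]; congr 1; ring
    _ ≤ K * totalVar u a x + K * totalVar u x b :=
        (abs_add_le _ _).trans <| add_le_add
          (P.abs_RSsum_sub_mul_le (hu.mono (Icc_subset_Icc le_rfl hxb)) hleft)
          (Q.abs_RSsum_sub_mul_le (hu.mono (Icc_subset_Icc hax le_rfl)) hright)
    _ = K * totalVar u a b := by rw [← mul_add, totalVar_add hu hax hxb]

theorem two_point_subinterval_midpoints_bounded_variation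
    (a b H r x I : ℝ) (f u : ℝ → ℝ)
    (hr : 0 < r) (hr1 : r ≤ 1) (hH : 0 ≤ H)
    (hf : ∀ s ∈ Set.Icc a b, ∀ t ∈ Set.Icc a b, |f s - f t| ≤ H * |s - t| ^ r)
    (hu : BoundedVariationOn u (Set.Icc a b))
    (hx : x ∈ Set.Icc a b)
    (hI : IsRSIntegral f u a b I) :
    |I - (u x - u a) * f ((a + x) / 2) - (u b - u x) * f ((x + b) / 2)| ≤
      (H / 2 ^ r) * ((b - a) / 2 + |x - (a + b) / 2|) ^ r * totalVar u a b :=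
  two_point_subinterval_midpoints_bounded_variation_general a b H r x I f u hr hH hf hu hx hI
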